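/- arXiv:2106.13718 — 3 statements merged into one kernel-verified Lean document; each statement's English description precedes it below -/
import Mathlib

section
/- Let a₁, a₂ > 0, α > 0, γ ∈ (0,1), ℓ > 0, β ∈ (0,1], and let ψ : ℝ → ℝ satisfy ψ(0) = 1, |ψ(ε)| ≤ 1 for all ε ≥ 0, and |1 − ψ(ε)| ≤ L·ε^β for all ε ∈ [0, ε₀), for some constants L ≥ 0 and ε₀ > 0. Let q* ∈ ℝ, C ∈ ℝ, h₀ > 0, K ≥ 0, and let q : ℝ → ℝ satisfy |q(h) − q* − C·h^α| ≤ K·h^(α+1) for all h ∈ (0, h₀). For h > 0 set ψ_h := ψ((1−γ)h/ℓ) and define the Gaussian process posterior mean at 0, m(h) := a₁·[q(h)·γ^α·(γ^α − ψ_h) + q(γh)·(1 − γ^α·ψ_h)] / [a₁·(1 − 2γ^α·ψ_h + γ^(2α)) + a₂·γ^(2α)·(1 − ψ_h²)·h^(2α)]. Then there exist M ≥ 0 and h₁ > 0 such that the denominator is positive and |q* − m(h)| ≤ M·h^(α+β) for all h ∈ (0, h₁). -/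
set_option maxHeartbeats 1000000 in
/-- Higher-order convergence of the Gaussian process posterior mean in black box
probabilistic numerics: under a Hölder condition of exponent `β` on the kernel `ψ`
at zero, the posterior mean at `h = 0` converges to `q*` at order `α + β`. -/
theorem bbpn_posterior_mean_order
    (a₁ a₂ α γ ℓ β : ℝ)
    (ha₁ : 0 < a₁) (ha₂ : 0 < a₂) (hα : 0 < α) (hγ : γ ∈ Set.Ioo (0:ℝ) 1)
    (hℓ : 0 < ℓ) (hβ : β ∈ Set.Ioc (0:ℝ) 1)
    (ψ : ℝ → ℝ) (L ε₀ : ℝ) (hL : 0 ≤ L) (hε₀ : 0 < ε₀)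
    (hψ0 : ψ 0 = 1) (hψb : ∀ ε ≥ (0:ℝ), |ψ ε| ≤ 1)
    (hψH : ∀ ε ∈ Set.Ico (0:ℝ) ε₀, |1 - ψ ε| ≤ L * ε ^ β)
    (qstar C h₀ K : ℝ) (hh₀ : 0 < h₀) (hK : 0 ≤ K)
    (q : ℝ → ℝ)
    (hq : ∀ h ∈ Set.Ioo (0:ℝ) h₀, |q h - qstar - C * h ^ α| ≤ K * h ^ (α + 1)) :
    ∃ M : ℝ, 0 ≤ M ∧ ∃ h₁ : ℝ, 0 < h₁ ∧ ∀ h ∈ Set.Ioo (0:ℝ) h₁,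
      0 < a₁ * (1 - 2 * γ ^ α * ψ ((1 - γ) * h / ℓ) + γ ^ (2 * α))
            + a₂ * γ ^ (2 * α) * (1 - ψ ((1 - γ) * h / ℓ) ^ 2) * h ^ (2 * α) ∧
      |qstar -
        a₁ * (q h * γ ^ α * (γ ^ α - ψ ((1 - γ) * h / ℓ))
              + q (γ * h) * (1 - γ ^ α * ψ ((1 - γ) * h / ℓ)))
          / (a₁ * (1 - 2 * γ ^ α * ψ ((1 - γ) * h / ℓ) + γ ^ (2 * α))
              + a₂ * γ ^ (2 * α) * (1 - ψ ((1 - γ) * h / ℓ) ^ 2) * h ^ (2 * α))|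
        ≤ M * h ^ (α + β) := by
  obtain ⟨hγ0, hγ1⟩ := hγ
  obtain ⟨hβ0, hβ1⟩ := hβ
  have h1γ : 0 < 1 - γ := by linarith
  set g : ℝ := γ ^ α with hgdef
  have hg0 : 0 < g := Real.rpow_pos_of_pos hγ0 α
  have hg1 : g < 1 := Real.rpow_lt_one hγ0.le hγ1 hα
  set c : ℝ := ((1 - γ) / ℓ) ^ β with hcdef
  have hc0 : 0 ≤ c := Real.rpow_nonneg (by positivity) β
  set A : ℝ := |qstar| * a₂ * g ^ 2 * (2 * L * c) + a₁ * |C| * g * (1 + g) * (L * c)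
      + 4 * a₁ * K with hAdef
  have hA0 : 0 ≤ A := by
    refine add_nonneg (add_nonneg ?_ ?_) ?_
    · exact mul_nonneg (by positivity) (mul_nonneg (mul_nonneg (by norm_num) hL) hc0)
    · exact mul_nonneg (by positivity) (mul_nonneg hL hc0)
    · exact mul_nonneg (by positivity) hK
  have hden0 : 0 < a₁ * (1 - g) ^ 2 := mul_pos ha₁ (pow_pos (by linarith) 2)
  refine ⟨A / (a₁ * (1 - g) ^ 2), div_nonneg hA0 hden0.le,
    min 1 (min h₀ (ℓ * ε₀ / (1 - γ))), lt_min one_pos (lt_min hh₀ (by positivity)), ?_⟩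
  intro h hh
  obtain ⟨hh0, hhm⟩ := hh
  have hh1 : h < 1 := lt_of_lt_of_le hhm (min_le_left _ _)
  have hhh₀ : h < h₀ := lt_of_lt_of_le hhm ((min_le_right _ _).trans (min_le_left _ _))
  have hhε : h < ℓ * ε₀ / (1 - γ) :=
    lt_of_lt_of_le hhm ((min_le_right _ _).trans (min_le_right _ _))
  set ε : ℝ := (1 - γ) * h / ℓ with hεdef
  have hε0 : 0 < ε := by positivity
  have hεε₀ : ε < ε₀ := by
    rw [hεdef, div_lt_iff₀ hℓ]
    calc (1 - γ) * h = h * (1 - γ) := by ring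
      _ < ℓ * ε₀ / (1 - γ) * (1 - γ) := mul_lt_mul_of_pos_right hhε h1γ
      _ = ℓ * ε₀ := div_mul_cancel₀ _ h1γ.ne'
      _ = ε₀ * ℓ := mul_comm _ _
  set ψh : ℝ := ψ ε with hψhdef
  have hψabs : |ψh| ≤ 1 := hψb _ hε0.le
  obtain ⟨hψlo, hψhi⟩ := abs_le.mp hψabs
  -- Hölder bound
  have hb2 : |1 - ψh| ≤ L * (c * h ^ β) := by
    have hH := hψH ε ⟨hε0.le, hεε₀⟩
    have hεβ : ε ^ β = c * h ^ β := by
      rw [hεdef, hcdef, show (1 - γ) * h / ℓ = ((1 - γ) / ℓ) * h by ring,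
        Real.mul_rpow (by positivity) hh0.le]
    rwa [hεβ] at hH
  have hb1 : |1 - ψh ^ 2| ≤ 2 * L * c * h ^ β := by
    have e : 1 - ψh ^ 2 = (1 - ψh) * (1 + ψh) := by ring
    have h1 : |1 + ψh| ≤ 2 := abs_le.mpr ⟨by linarith, by linarith⟩
    calc |1 - ψh ^ 2| = |1 - ψh| * |1 + ψh| := by rw [e, abs_mul]
      _ ≤ (L * (c * h ^ β)) * 2 :=
        mul_le_mul hb2 h1 (abs_nonneg _) (by positivity)
      _ = 2 * L * c * h ^ β := by ring
  -- powers
  set H : ℝ := h ^ α with hHdef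
  have hH0 : 0 < H := Real.rpow_pos_of_pos hh0 α
  have hH1 : H ≤ 1 := Real.rpow_le_one hh0.le hh1.le hα.le
  have hγ2 : γ ^ (2 * α) = g ^ 2 := by
    rw [two_mul, Real.rpow_add hγ0, ← hgdef, sq]
  have hH2 : h ^ (2 * α) = H ^ 2 := by
    rw [two_mul, Real.rpow_add hh0, ← hHdef, sq]
  have hab : h ^ (α + β) = H * h ^ β := by
    rw [Real.rpow_add hh0, ← hHdef]
  have hab0 : 0 ≤ h ^ (α + β) := Real.rpow_nonneg hh0.le _
  have hpow1 : h ^ β * H ^ 2 ≤ h ^ (α + β) := by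
    have e : h ^ β * H ^ 2 = h ^ (α + β) * H := by rw [hab]; ring
    rw [e]
    calc h ^ (α + β) * H ≤ h ^ (α + β) * 1 := mul_le_mul_of_nonneg_left hH1 hab0
      _ = h ^ (α + β) := mul_one _
  have hpow3 : h ^ (α + 1) ≤ h ^ (α + β) :=
    Real.rpow_le_rpow_of_exponent_ge hh0 hh1.le (by linarith)
  -- error terms
  have he₁ : |q h - qstar - C * H| ≤ K * h ^ (α + 1) := hq h ⟨hh0, hhh₀⟩
  have hγh : (γ * h) ^ α = g * H := Real.mul_rpow hγ0.le hh0.le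
  have hγhlt : γ * h < h := by
    exact mul_lt_of_lt_one_left hh0 hγ1
  have he₂ : |q (γ * h) - qstar - C * (g * H)| ≤ K * h ^ (α + 1) := by
    have h1 := hq (γ * h) ⟨by positivity, hγhlt.trans hhh₀⟩
    rw [hγh] at h1
    refine h1.trans (mul_le_mul_of_nonneg_left ?_ hK)
    exact Real.rpow_le_rpow (by positivity) hγhlt.le (by linarith)
  set e₁ : ℝ := q h - qstar - C * H with he₁def
  set e₂ : ℝ := q (γ * h) - qstar - C * (g * H) with he₂def
  have hq1 : q h = qstar + C * H + e₁ := by rw [he₁def]; ring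
  have hq2 : q (γ * h) = qstar + C * (g * H) + e₂ := by rw [he₂def]; ring
  -- denominator
  rw [hγ2, hH2]
  set D : ℝ := a₁ * (1 - 2 * g * ψh + g ^ 2) + a₂ * g ^ 2 * (1 - ψh ^ 2) * H ^ 2 with hDdef
  have hψsq : ψh ^ 2 ≤ 1 := (sq_le_one_iff_abs_le_one ψh).mpr hψabs
  have hDlb : a₁ * (1 - g) ^ 2 ≤ D := by
    have t1 : 0 ≤ a₁ * (2 * g * (1 - ψh)) :=
      mul_nonneg ha₁.le (mul_nonneg (by positivity) (by linarith))
    have t2 : 0 ≤ a₂ * g ^ 2 * (1 - ψh ^ 2) * H ^ 2 :=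
      mul_nonneg (mul_nonneg (by positivity) (by linarith)) (sq_nonneg H)
    have expand : a₁ * (1 - 2 * g * ψh + g ^ 2)
        = a₁ * (1 - g) ^ 2 + a₁ * (2 * g * (1 - ψh)) := by ring
    rw [hDdef, expand]
    linarith
  have hD0 : 0 < D := lt_of_lt_of_le hden0 hDlb
  have hDne : D ≠ 0 := hD0.ne'
  refine ⟨hD0, ?_⟩
  -- key algebraic identity
  have key : qstar - a₁ * (q h * g * (g - ψh) + q (γ * h) * (1 - g * ψh)) / D
      = (qstar * a₂ * g ^ 2 * (1 - ψh ^ 2) * H ^ 2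
          - a₁ * C * g * (1 + g) * (1 - ψh) * H
          - a₁ * (e₁ * g * (g - ψh) + e₂ * (1 - g * ψh))) / D := by
    rw [hq1, hq2, eq_div_iff hDne, sub_mul, div_mul_cancel₀ _ hDne, hDdef]
    ring
  rw [key, abs_div, abs_of_pos hD0]
  have habs_sub : ∀ x y : ℝ, |x - y| ≤ |x| + |y| := fun x y => by
    rw [sub_eq_add_neg]
    exact (abs_add_le _ _).trans (by rw [abs_neg])
  -- bounds on each term
  have hT1 : |qstar * a₂ * g ^ 2 * (1 - ψh ^ 2) * H ^ 2|
      ≤ |qstar| * a₂ * g ^ 2 * (2 * L * c) * h ^ (α + β) := by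
    calc |qstar * a₂ * g ^ 2 * (1 - ψh ^ 2) * H ^ 2|
        = |qstar| * a₂ * g ^ 2 * |1 - ψh ^ 2| * H ^ 2 := by
          rw [abs_mul, abs_mul, abs_mul, abs_mul, abs_of_pos ha₂,
            abs_of_pos (pow_pos hg0 2), abs_of_nonneg (sq_nonneg H)]
      _ ≤ |qstar| * a₂ * g ^ 2 * (2 * L * c * h ^ β) * H ^ 2 :=
          mul_le_mul_of_nonneg_right (mul_le_mul_of_nonneg_left hb1 (by positivity))
            (sq_nonneg H)
      _ = |qstar| * a₂ * g ^ 2 * (2 * L * c) * (h ^ β * H ^ 2) := by ring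
      _ ≤ |qstar| * a₂ * g ^ 2 * (2 * L * c) * h ^ (α + β) := by
          refine mul_le_mul_of_nonneg_left hpow1 ?_
          exact mul_nonneg (by positivity) (mul_nonneg (mul_nonneg (by norm_num) hL) hc0)
  have hT2 : |a₁ * C * g * (1 + g) * (1 - ψh) * H|
      ≤ a₁ * |C| * g * (1 + g) * (L * c) * h ^ (α + β) := by
    calc |a₁ * C * g * (1 + g) * (1 - ψh) * H|
        = a₁ * |C| * g * (1 + g) * |1 - ψh| * H := by
          rw [abs_mul, abs_mul, abs_mul, abs_mul, abs_mul, abs_of_pos ha₁,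
            abs_of_pos hg0, abs_of_pos (by linarith : (0:ℝ) < 1 + g), abs_of_pos hH0]
      _ ≤ a₁ * |C| * g * (1 + g) * (L * (c * h ^ β)) * H :=
          mul_le_mul_of_nonneg_right (mul_le_mul_of_nonneg_left hb2 (by positivity)) hH0.le
      _ = a₁ * |C| * g * (1 + g) * (L * c) * h ^ (α + β) := by rw [hab]; ring
  have hgψ : |g - ψh| ≤ 2 := abs_le.mpr ⟨by linarith, by linarith⟩
  have hgψmul : |g * ψh| ≤ 1 := by
    rw [abs_mul, abs_of_pos hg0]
    calc g * |ψh| ≤ 1 * 1 := mul_le_mul hg1.le hψabs (abs_nonneg _) zero_le_one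
      _ = 1 := one_mul 1
  obtain ⟨hgψlo, hgψhi⟩ := abs_le.mp hgψmul
  have hgψ2 : |1 - g * ψh| ≤ 2 := abs_le.mpr ⟨by linarith, by linarith⟩
  have i0 : |e₁ * g * (g - ψh) + e₂ * (1 - g * ψh)|
      ≤ K * h ^ (α + 1) * 2 + K * h ^ (α + 1) * 2 := by
    refine (abs_add_le _ _).trans (add_le_add ?_ ?_)
    · rw [abs_mul, abs_mul, abs_of_pos hg0]
      calc |e₁| * g * |g - ψh| ≤ (K * h ^ (α + 1)) * 1 * 2 := by
            refine mul_le_mul (mul_le_mul he₁ hg1.le hg0.le (by positivity)) hgψ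
              (abs_nonneg _) (by positivity)
        _ = K * h ^ (α + 1) * 2 := by ring
    · rw [abs_mul]
      exact mul_le_mul he₂ hgψ2 (abs_nonneg _) (by positivity)
  have hT3 : |a₁ * (e₁ * g * (g - ψh) + e₂ * (1 - g * ψh))| ≤ 4 * a₁ * K * h ^ (α + β) := by
    rw [abs_mul, abs_of_pos ha₁]
    calc a₁ * |e₁ * g * (g - ψh) + e₂ * (1 - g * ψh)|
        ≤ a₁ * (K * h ^ (α + 1) * 2 + K * h ^ (α + 1) * 2) :=
          mul_le_mul_of_nonneg_left i0 ha₁.le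
      _ = 4 * a₁ * K * h ^ (α + 1) := by ring
      _ ≤ 4 * a₁ * K * h ^ (α + β) :=
          mul_le_mul_of_nonneg_left hpow3 (by positivity)
  have hEbound : |qstar * a₂ * g ^ 2 * (1 - ψh ^ 2) * H ^ 2
      - a₁ * C * g * (1 + g) * (1 - ψh) * H
      - a₁ * (e₁ * g * (g - ψh) + e₂ * (1 - g * ψh))| ≤ A * h ^ (α + β) := by
    have s1 := habs_sub (qstar * a₂ * g ^ 2 * (1 - ψh ^ 2) * H ^ 2
      - a₁ * C * g * (1 + g) * (1 - ψh) * H) (a₁ * (e₁ * g * (g - ψh) + e₂ * (1 - g * ψh)))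
    have s2 := habs_sub (qstar * a₂ * g ^ 2 * (1 - ψh ^ 2) * H ^ 2)
      (a₁ * C * g * (1 + g) * (1 - ψh) * H)
    have e : A * h ^ (α + β) = |qstar| * a₂ * g ^ 2 * (2 * L * c) * h ^ (α + β)
        + a₁ * |C| * g * (1 + g) * (L * c) * h ^ (α + β)
        + 4 * a₁ * K * h ^ (α + β) := by rw [hAdef]; ring
    rw [e]
    linarith
  calc |qstar * a₂ * g ^ 2 * (1 - ψh ^ 2) * H ^ 2
      - a₁ * C * g * (1 + g) * (1 - ψh) * H
      - a₁ * (e₁ * g * (g - ψh) + e₂ * (1 - g * ψh))| / D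
      ≤ (A * h ^ (α + β)) / (a₁ * (1 - g) ^ 2) :=
        div_le_div₀ (by positivity) hEbound hden0 hDlb
    _ = A / (a₁ * (1 - g) ^ 2) * h ^ (α + β) := by ring
end

section
/- Let a₁, a₂ > 0, α > 0, γ ∈ (0,1), ℓ > 0, and let ψ : ℝ → ℝ satisfy ψ(0) = 1, |ψ(ε)| ≤ 1 for all ε ≥ 0, and the Lipschitz-type bound |1 − ψ(ε)| ≤ L·ε for all ε ∈ [0, ε₀), for some constants L ≥ 0 and ε₀ > 0. Let q* ∈ ℝ, C ∈ ℝ, h₀ > 0, K ≥ 0, and let q : ℝ → ℝ satisfy |q(h) − q* − C·h^α| ≤ K·h^(α+1) for all h ∈ (0, h₀). For h > 0 set ψ_h := ψ((1−γ)h/ℓ) and define m(h) := a₁·[q(h)·γ^α·(γ^α − ψ_h) + q(γh)·(1 − γ^α·ψ_h)] / [a₁·(1 − 2γ^α·ψ_h + γ^(2α)) + a₂·γ^(2α)·(1 − ψ_h²)·h^(2α)]. Then there exist M ≥ 0 and h₁ > 0 such that |q* − m(h)| ≤ M·h^(α+1) for all h ∈ (0, h₁); that is, the Gaussian process posterior mean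 m is a numerical method of one order higher, α + 1, than the method q on which it is based. -/
/-!
Write `g = γ ^ α`, `x = h ^ α`, `P = ψ_h` and `q h = q* + C x + e₁`, `q (γ h) = q* + C g x + e₂`
with `e₁, e₂ = O(h ^ (α + 1))`. Multiplying the error `q* - N / D` by the denominator `D`, the
`q*`-terms cancel exactly and the `C x`-terms cancel up to a factor `1 - P = O(h)`:
`q* D - N = q* a₂ g² (1 - P²) x² - a₁ C g (1 + g) (1 - P) x - a₁ (g (g - P) e₁ + (1 - g P) e₂)`,
and every summand is `O(h ^ (α + 1))`. Since `|P| ≤ 1`, `D ≥ a₁ (1 - g)² > 0`, so dividing by `D`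
keeps the order.
-/

open Set Filter Topology Asymptotics

lemma tendsto_const_mul_nhdsGT_zero {c : ℝ} (hc : 0 < c) :
    Tendsto (c * ·) (𝓝[>] 0) (𝓝[>] 0) :=
  tendsto_iff_comap.mpr (comap_mulLeft_nhdsGT_zero hc).ge

lemma isBigO_nhdsGT_of_bound {E F : Type*} [Norm E] [Norm F] {f : ℝ → E} {g : ℝ → F}
    {a b M : ℝ} (hab : a < b) (hfg : ∀ x ∈ Ioo a b, ‖f x‖ ≤ M * ‖g x‖) : f =O[𝓝[>] a] g :=
  IsBigO.of_bound M (mem_of_superset (Ioo_mem_nhdsGT hab) hfg)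

lemma Asymptotics.IsBigO.exists_bound_nhdsGT {E F : Type*} [Norm E] [SeminormedAddCommGroup F]
    {f : ℝ → E} {g : ℝ → F} {a : ℝ} (hfg : f =O[𝓝[>] a] g) :
    ∃ M, 0 ≤ M ∧ ∃ b, a < b ∧ ∀ x ∈ Ioo a b, ‖f x‖ ≤ M * ‖g x‖ := by
  obtain ⟨M, hM, hfgM⟩ := hfg.exists_nonneg
  obtain ⟨b, hab, hb⟩ := mem_nhdsGT_iff_exists_Ioo_subset.mp hfgM.bound
  exact ⟨M, hM, b, hab, hb⟩

lemma Asymptotics.IsBigO.one_mul_isBigO {ι : Type*} {l : Filter ι} {f g r : ι → ℝ}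
    (hf : f =O[l] fun _ => (1 : ℝ)) (hg : g =O[l] r) : (fun i => f i * g i) =O[l] r := by
  simpa using hf.mul hg

lemma Asymptotics.IsBigO.comp_const_mul_nhdsGT_zero {E : Type*} [Norm E] {f : ℝ → E} {c : ℝ}
    (hc : 0 < c) (hf : f =O[𝓝[>] 0] id) : (fun h => f (c * h)) =O[𝓝[>] 0] id :=
  (hf.comp_tendsto (tendsto_const_mul_nhdsGT_zero hc)).trans (isBigO_const_mul_self c id _)

/-- `a₂ x²` times this is the determinant of the Gram matrix of the data `h, γ h`,
where `g = γ ^ α`, `x = h ^ α` and `P = ψ_h`. -/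
noncomputable def gramDenom (a₁ a₂ g x P : ℝ) : ℝ :=
  a₁ * (1 - 2 * g * P + g ^ 2) + a₂ * g ^ 2 * (1 - P ^ 2) * x ^ 2

/-- The posterior mean at `0` given the data `q₁ = q h` and `q₂ = q (γ h)`. -/
noncomputable def posteriorMean (a₁ a₂ g x P q₁ q₂ : ℝ) : ℝ :=
  a₁ * (q₁ * g * (g - P) + q₂ * (1 - g * P)) / gramDenom a₁ a₂ g x P

lemma le_gramDenom {a₁ a₂ g x P : ℝ} (ha₁ : 0 ≤ a₁) (ha₂ : 0 ≤ a₂) (hg : 0 ≤ g) (hP : |P| ≤ 1) :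
    a₁ * (1 - g) ^ 2 ≤ gramDenom a₁ a₂ g x P := by
  obtain ⟨hP₁, hP₂⟩ := abs_le.mp hP
  have hP_sq : 0 ≤ 1 - P ^ 2 := by nlinarith
  have h₁ := mul_nonneg (mul_nonneg ha₁ hg) (sub_nonneg.mpr hP₂)
  have h₂ := mul_nonneg (mul_nonneg ha₂ (sq_nonneg g)) (mul_nonneg hP_sq (sq_nonneg x))
  unfold gramDenom
  nlinarith

lemma sub_posteriorMean_eq {a₁ a₂ g x P : ℝ} (qstar C q₁ q₂ : ℝ)
    (hD : gramDenom a₁ a₂ g x P ≠ 0) :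
    qstar - posteriorMean a₁ a₂ g x P q₁ q₂ =
      (qstar * a₂ * g ^ 2 * (1 + P) * x * ((1 - P) * x) - a₁ * C * g * (1 + g) * ((1 - P) * x)
        - a₁ * (g * (g - P) * (q₁ - qstar - C * x) + (1 - g * P) * (q₂ - qstar - C * g * x)))
        * (gramDenom a₁ a₂ g x P)⁻¹ := by
  rw [posteriorMean, div_eq_mul_inv, eq_comm, ← sub_eq_zero]
  field_simp
  unfold gramDenom
  ring

lemma sub_posteriorMean_isBigO {ι : Type*} {l : Filter ι} {a₁ a₂ g qstar C : ℝ}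
    {x P q₁ q₂ r : ι → ℝ} (ha₁ : 0 < a₁) (ha₂ : 0 ≤ a₂) (hg : g ∈ Ico 0 1)
    (hP : ∀ᶠ i in l, |P i| ≤ 1) (hx : x =O[l] fun _ => (1 : ℝ))
    (hPx : (fun i => (1 - P i) * x i) =O[l] r)
    (hq₁ : (fun i => q₁ i - qstar - C * x i) =O[l] r)
    (hq₂ : (fun i => q₂ i - qstar - C * g * x i) =O[l] r) :
    (fun i => qstar - posteriorMean a₁ a₂ g (x i) (P i) (q₁ i) (q₂ i)) =O[l] r := by
  have hd : 0 < a₁ * (1 - g) ^ 2 := mul_pos ha₁ (pow_pos (sub_pos.mpr hg.2) 2)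
  have hD : ∀ᶠ i in l, a₁ * (1 - g) ^ 2 ≤ gramDenom a₁ a₂ g (x i) (P i) :=
    hP.mono fun i hi => le_gramDenom ha₁.le ha₂ hg.1 hi
  have hDinv : (fun i => (gramDenom a₁ a₂ g (x i) (P i))⁻¹) =O[l] fun _ => (1 : ℝ) :=
    IsBigO.of_bound (a₁ * (1 - g) ^ 2)⁻¹ <| hD.mono fun i hi => by
      rw [norm_inv, norm_one, mul_one, Real.norm_of_nonneg (hd.le.trans hi)]
      exact inv_anti₀ hd hi
  have hPb : P =O[l] fun _ => (1 : ℝ) := IsBigO.of_bound 1 <| hP.mono fun i hi => by simpa using hi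
  have h1P : (fun i => 1 + P i) =O[l] fun _ => (1 : ℝ) := (isBigO_const_one ℝ 1 l).add hPb
  have hgP : (fun i => g - P i) =O[l] fun _ => (1 : ℝ) := (isBigO_const_one ℝ g l).sub hPb
  have h1gP : (fun i => 1 - g * P i) =O[l] fun _ => (1 : ℝ) :=
    (isBigO_const_one ℝ 1 l).sub (hPb.const_mul_left g)
  have hnum : (fun i => qstar * a₂ * g ^ 2 * (1 + P i) * x i * ((1 - P i) * x i)
      - a₁ * C * g * (1 + g) * ((1 - P i) * x i)
      - a₁ * (g * (g - P i) * (q₁ i - qstar - C * x i)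
        + (1 - g * P i) * (q₂ i - qstar - C * g * x i))) =O[l] r := by
    refine (((h1P.const_mul_left _).one_mul_isBigO hx).one_mul_isBigO hPx |>.sub
      (hPx.const_mul_left _)).sub (IsBigO.const_mul_left ?_ _)
    exact ((hgP.const_mul_left g).one_mul_isBigO hq₁).add (h1gP.one_mul_isBigO hq₂)
  refine (hnum.mul hDinv).congr' (hD.mono fun i hi => ?_) (Eventually.of_forall fun _ => mul_one _)
  exact (sub_posteriorMean_eq qstar C _ _ (hd.trans_le hi).ne').symm

lemma sub_rpow_comp_const_mul_isBigO {q : ℝ → ℝ} {qstar C α c : ℝ} (hc : 0 < c)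
    (hq : (fun h => q h - qstar - C * h ^ α) =O[𝓝[>] 0] (· ^ (α + 1))) :
    (fun h => q (c * h) - qstar - C * c ^ α * h ^ α) =O[𝓝[>] 0] (· ^ (α + 1)) := by
  have hscale : (fun h : ℝ => (c * h) ^ (α + 1)) =O[𝓝[>] 0] (· ^ (α + 1)) :=
    (isBigO_const_mul_self (c ^ (α + 1)) _ _).congr'
      (eventually_mem_nhdsWithin.mono fun h hh => (Real.mul_rpow hc.le (le_of_lt hh)).symm)
      EventuallyEq.rfl
  refine ((hq.comp_tendsto (tendsto_const_mul_nhdsGT_zero hc)).trans hscale).congr' ?_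
    EventuallyEq.rfl
  filter_upwards [self_mem_nhdsWithin] with h hh
  simp only [Function.comp_apply, Real.mul_rpow hc.le (le_of_lt hh), mul_assoc]

lemma sub_posteriorMean_rpow_isBigO {a₁ a₂ α γ qstar C : ℝ} {P q : ℝ → ℝ} (ha₁ : 0 < a₁)
    (ha₂ : 0 ≤ a₂) (hα : 0 < α) (hγ : γ ∈ Ioo 0 1)
    (hP : ∀ᶠ h in 𝓝[>] 0, |P h| ≤ 1) (hP1 : (fun h => 1 - P h) =O[𝓝[>] 0] id)
    (hq : (fun h => q h - qstar - C * h ^ α) =O[𝓝[>] 0] (· ^ (α + 1))) :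
    (fun h => qstar - posteriorMean a₁ a₂ (γ ^ α) (h ^ α) (P h) (q h) (q (γ * h)))
      =O[𝓝[>] 0] (· ^ (α + 1)) := by
  have hx : (fun h : ℝ => h ^ α) =O[𝓝[>] 0] fun _ => (1 : ℝ) :=
    ((Real.continuousAt_rpow_const 0 α (Or.inr hα.le)).tendsto.mono_left
      nhdsWithin_le_nhds).isBigO_one ℝ
  have hPx : (fun h => (1 - P h) * h ^ α) =O[𝓝[>] 0] (· ^ (α + 1)) :=
    (hP1.mul (isBigO_refl (· ^ α) _)).congr' EventuallyEq.rfl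
      (eventually_mem_nhdsWithin.mono fun h hh => by
        simp [Real.rpow_add_one (ne_of_gt hh), mul_comm])
  exact sub_posteriorMean_isBigO ha₁ ha₂
    ⟨(Real.rpow_pos_of_pos hγ.1 α).le, Real.rpow_lt_one hγ.1.le hγ.2 hα⟩ hP hx hPx hq
    (sub_rpow_comp_const_mul_isBigO hγ.1 hq)

theorem bbpn_posterior_mean_order_succ_general
    (a₁ a₂ α γ ℓ : ℝ)
    (ha₁ : 0 < a₁) (ha₂ : 0 < a₂) (hα : 0 < α) (hγ : γ ∈ Set.Ioo (0:ℝ) 1)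
    (hℓ : 0 < ℓ)
    (ψ : ℝ → ℝ) (L ε₀ : ℝ) (hε₀ : 0 < ε₀)
    (hψb : ∀ ε ≥ (0:ℝ), |ψ ε| ≤ 1)
    (hψLip : ∀ ε ∈ Set.Ico (0:ℝ) ε₀, |1 - ψ ε| ≤ L * ε)
    (qstar C h₀ K : ℝ) (hh₀ : 0 < h₀)
    (q : ℝ → ℝ)
    (hq : ∀ h ∈ Set.Ioo (0:ℝ) h₀, |q h - qstar - C * h ^ α| ≤ K * h ^ (α + 1)) :
    ∃ M : ℝ, 0 ≤ M ∧ ∃ h₁ : ℝ, 0 < h₁ ∧ ∀ h ∈ Set.Ioo (0:ℝ) h₁,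
      |qstar -
        a₁ * (q h * γ ^ α * (γ ^ α - ψ ((1 - γ) * h / ℓ))
              + q (γ * h) * (1 - γ ^ α * ψ ((1 - γ) * h / ℓ)))
          / (a₁ * (1 - 2 * γ ^ α * ψ ((1 - γ) * h / ℓ) + γ ^ (2 * α))
              + a₂ * γ ^ (2 * α) * (1 - ψ ((1 - γ) * h / ℓ) ^ 2) * h ^ (2 * α))|
        ≤ M * h ^ (α + 1) := by
  have hq' : (fun h => q h - qstar - C * h ^ α) =O[𝓝[>] 0] (· ^ (α + 1)) :=
    isBigO_nhdsGT_of_bound hh₀ fun h hh => by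
      simpa [abs_of_pos (Real.rpow_pos_of_pos hh.1 _)] using hq h hh
  have hψ : (fun ε => 1 - ψ ε) =O[𝓝[>] 0] id :=
    isBigO_nhdsGT_of_bound hε₀ fun ε hε => by
      simpa [abs_of_pos hε.1] using hψLip ε (Ioo_subset_Ico_self hε)
  have hP : ∀ᶠ h in 𝓝[>] (0 : ℝ), |ψ ((1 - γ) * h / ℓ)| ≤ 1 :=
    eventually_mem_nhdsWithin.mono fun h hh =>
      hψb _ (div_nonneg (mul_nonneg (sub_nonneg.mpr hγ.2.le) (le_of_lt hh)) hℓ.le)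
  have hP1 : (fun h => 1 - ψ ((1 - γ) * h / ℓ)) =O[𝓝[>] 0] id := by
    simpa only [div_mul_eq_mul_div] using
      hψ.comp_const_mul_nhdsGT_zero (div_pos (sub_pos.mpr hγ.2) hℓ)
  obtain ⟨M, hM, h₁, hh₁, hbound⟩ :=
    (sub_posteriorMean_rpow_isBigO ha₁ ha₂.le hα hγ hP hP1 hq').exists_bound_nhdsGT
  refine ⟨M, hM, h₁, hh₁, fun h hh => ?_⟩
  have hsq {x : ℝ} (hx : 0 ≤ x) : x ^ (2 * α) = (x ^ α) ^ 2 := by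
    rw [mul_comm, Real.rpow_mul hx, Real.rpow_two]
  rw [hsq hγ.1.le, hsq hh.1.le]
  simpa [posteriorMean, gramDenom, abs_of_pos (Real.rpow_pos_of_pos hh.1 _)] using hbound h hh

/-- With a Lipschitz kernel `ψ` (Hölder exponent `β = 1`), the Gaussian process
posterior mean of black box probabilistic numerics is a numerical method of
order `α + 1`, one order higher than the method `q` on which it is based. -/
theorem bbpn_posterior_mean_order_succ
    (a₁ a₂ α γ ℓ : ℝ)
    (ha₁ : 0 < a₁) (ha₂ : 0 < a₂) (hα : 0 < α) (hγ : γ ∈ Set.Ioo (0:ℝ) 1)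
    (hℓ : 0 < ℓ)
    (ψ : ℝ → ℝ) (L ε₀ : ℝ) (hL : 0 ≤ L) (hε₀ : 0 < ε₀)
    (hψ0 : ψ 0 = 1) (hψb : ∀ ε ≥ (0:ℝ), |ψ ε| ≤ 1)
    (hψLip : ∀ ε ∈ Set.Ico (0:ℝ) ε₀, |1 - ψ ε| ≤ L * ε)
    (qstar C h₀ K : ℝ) (hh₀ : 0 < h₀) (hK : 0 ≤ K)
    (q : ℝ → ℝ)
    (hq : ∀ h ∈ Set.Ioo (0:ℝ) h₀, |q h - qstar - C * h ^ α| ≤ K * h ^ (α + 1)) :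
    ∃ M : ℝ, 0 ≤ M ∧ ∃ h₁ : ℝ, 0 < h₁ ∧ ∀ h ∈ Set.Ioo (0:ℝ) h₁,
      |qstar -
        a₁ * (q h * γ ^ α * (γ ^ α - ψ ((1 - γ) * h / ℓ))
              + q (γ * h) * (1 - γ ^ α * ψ ((1 - γ) * h / ℓ)))
          / (a₁ * (1 - 2 * γ ^ α * ψ ((1 - γ) * h / ℓ) + γ ^ (2 * α))
              + a₂ * γ ^ (2 * α) * (1 - ψ ((1 - γ) * h / ℓ) ^ 2) * h ^ (2 * α))|
        ≤ M * h ^ (α + 1) :=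
  bbpn_posterior_mean_order_succ_general a₁ a₂ α γ ℓ ha₁ ha₂ hα hγ hℓ ψ L ε₀ hε₀ hψb hψLip qstar C
    h₀ K hh₀ q hq
end

section
/- Let a₁, a₂ > 0, α > 0, γ ∈ (0,1), ℓ > 0, and let ψ : ℝ → ℝ satisfy ψ(0) = 1 and |ψ(ε)| ≤ 1 for all ε ≥ 0, with ψ continuous at 0. Let q* ∈ ℝ, C ∈ ℝ, h₀ > 0, K ≥ 0, and let q : ℝ → ℝ satisfy |q(h) − q* − C·h^α| ≤ K·h^(α+1) for all h ∈ (0, h₀). For h > 0 set ψ_h := ψ((1−γ)h/ℓ) and m(h) := a₁·[q(h)·γ^α·(γ^α − ψ_h) + q(γh)·(1 − γ^α·ψ_h)] / [a₁·(1 − 2γ^α·ψ_h + γ^(2α)) + a₂·γ^(2α)·(1 − ψ_h²)·h^(2α)]. Then there exist constants C₁, C₂, C₃ ≥ 0 and h₁ > 0 such that for all h ∈ (0, h₁): |q* − m(h)| ≤ C₁·h^(2α) + C₂·|1 − ψ_h|·h^α + C₃·h^(α+1). -/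
set_option maxHeartbeats 1000000 in
/-- Three-term error decomposition for the Gaussian process posterior mean of
black box probabilistic numerics: the error at `h = 0` is bounded by a term of
order `h^(2α)`, a term `|1 - ψ_h| · h^α`, and a term of order `h^(α+1)`. -/
theorem bbpn_posterior_mean_error_decomposition
    (a₁ a₂ α γ ℓ : ℝ)
    (ha₁ : 0 < a₁) (ha₂ : 0 < a₂) (hα : 0 < α) (hγ : γ ∈ Set.Ioo (0:ℝ) 1)
    (hℓ : 0 < ℓ)
    (ψ : ℝ → ℝ)
    (hψ0 : ψ 0 = 1) (hψb : ∀ ε ≥ (0:ℝ), |ψ ε| ≤ 1)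
    (hψcont : ContinuousAt ψ 0)
    (qstar C h₀ K : ℝ) (hh₀ : 0 < h₀) (hK : 0 ≤ K)
    (q : ℝ → ℝ)
    (hq : ∀ h ∈ Set.Ioo (0:ℝ) h₀, |q h - qstar - C * h ^ α| ≤ K * h ^ (α + 1)) :
    ∃ C₁ C₂ C₃ : ℝ, 0 ≤ C₁ ∧ 0 ≤ C₂ ∧ 0 ≤ C₃ ∧ ∃ h₁ : ℝ, 0 < h₁ ∧
      ∀ h ∈ Set.Ioo (0:ℝ) h₁,
        |qstar -
          a₁ * (q h * γ ^ α * (γ ^ α - ψ ((1 - γ) * h / ℓ))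
                + q (γ * h) * (1 - γ ^ α * ψ ((1 - γ) * h / ℓ)))
            / (a₁ * (1 - 2 * γ ^ α * ψ ((1 - γ) * h / ℓ) + γ ^ (2 * α))
                + a₂ * γ ^ (2 * α) * (1 - ψ ((1 - γ) * h / ℓ) ^ 2) * h ^ (2 * α))|
          ≤ C₁ * h ^ (2 * α) + C₂ * |1 - ψ ((1 - γ) * h / ℓ)| * h ^ α
              + C₃ * h ^ (α + 1) := by
  obtain ⟨hγ0, hγ1⟩ := hγ
  set g := γ ^ α with hgdef
  have hg0 : 0 < g := Real.rpow_pos_of_pos hγ0 α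
  have hg1 : g < 1 := Real.rpow_lt_one hγ0.le hγ1 hα
  have h1g : (0:ℝ) < 1 - g := by linarith
  set A := a₁ * (1 - g) ^ 2 with hAdef
  have hApos : 0 < A := by positivity
  refine ⟨2 * |qstar| * a₂ * g ^ 2 / A, a₁ * |C| * g * (1 + g) / A,
    a₁ * K * (1 + g) ^ 2 / A, by positivity, by positivity, by positivity,
    h₀, hh₀, ?_⟩
  intro h hh
  obtain ⟨hh1, hh2⟩ := hh
  have hx0 : (0:ℝ) ≤ (1 - γ) * h / ℓ := by
    apply div_nonneg _ hℓ.le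
    apply mul_nonneg (by linarith) hh1.le
  set p := ψ ((1 - γ) * h / ℓ) with hpdef
  have hp' : |p| ≤ 1 := by rw [hpdef]; exact hψb _ hx0
  obtain ⟨hpl, hpu⟩ := abs_le.mp hp'
  set X := h ^ α with hXdef
  have hX0 : 0 < X := Real.rpow_pos_of_pos hh1 α
  set Y := h ^ (α + 1) with hYdef
  have hY0 : 0 < Y := Real.rpow_pos_of_pos hh1 _
  have hgh : (γ * h) ^ α = g * X := by
    rw [hXdef, hgdef]; exact Real.mul_rpow hγ0.le hh1.le
  have h2a : h ^ (2 * α) = X ^ 2 := by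
    rw [two_mul, Real.rpow_add hh1, hXdef]; exact (sq _).symm
  have hg2 : γ ^ (2 * α) = g ^ 2 := by
    rw [two_mul, Real.rpow_add hγ0, ← hgdef]; exact (sq _).symm
  set e₁ := q h - qstar - C * X with he1def
  set e₂ := q (γ * h) - qstar - C * (g * X) with he2def
  have he1b : |e₁| ≤ K * Y := by
    rw [he1def, hXdef, hYdef]; exact hq h ⟨hh1, hh2⟩
  have he2b : |e₂| ≤ K * Y := by
    have hgh0 : 0 < γ * h := by positivity
    have hgh2 : γ * h < h₀ := by nlinarith
    have h5 := hq (γ * h) ⟨hgh0, hgh2⟩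
    rw [hgh] at h5
    have h6 : (γ * h) ^ (α + 1) ≤ h ^ (α + 1) :=
      Real.rpow_le_rpow hgh0.le (by nlinarith) (by linarith)
    rw [he2def, hYdef]
    exact h5.trans (mul_le_mul_of_nonneg_left h6 hK)
  clear_value g A p X Y e₁ e₂
  rw [h2a, hg2]
  set D := a₁ * (1 - 2 * g * p + g ^ 2) + a₂ * g ^ 2 * (1 - p ^ 2) * X ^ 2
    with hDdef
  clear_value D
  have hDA : A ≤ D := by
    have t1 : 0 ≤ a₁ * g * (1 - p) := by
      apply mul_nonneg (mul_nonneg ha₁.le hg0.le); linarith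
    have t2 : 0 ≤ a₂ * g ^ 2 * ((1 - p) * (1 + p)) * X ^ 2 := by
      refine mul_nonneg (mul_nonneg (mul_nonneg ha₂.le (sq_nonneg g)) ?_) (sq_nonneg X)
      apply mul_nonneg <;> linarith
    rw [hDdef, hAdef]
    linarith [t1, t2]
  have hD0 : 0 < D := lt_of_lt_of_le hApos hDA
  have hq1 : q h = qstar + C * X + e₁ := by rw [he1def]; ring
  have hq2 : q (γ * h) = qstar + C * (g * X) + e₂ := by rw [he2def]; ring
  have key : qstar - a₁ * (q h * g * (g - p) + q (γ * h) * (1 - g * p)) / D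
      = (qstar * a₂ * g ^ 2 * (1 - p ^ 2) * X ^ 2
          - a₁ * C * g * (1 + g) * (1 - p) * X
          - a₁ * (e₁ * g * (g - p) + e₂ * (1 - g * p))) / D := by
    rw [hq1, hq2, eq_div_iff hD0.ne', sub_mul, div_mul_cancel₀ _ hD0.ne', hDdef]
    ring
  rw [key, abs_div, abs_of_pos hD0]
  clear hq hψcont hψb hψ0 hq1 hq2 he1def he2def hXdef hYdef hpdef hgdef hAdef
    hDdef hgh h2a hg2 hx0 hp' key q ψ hh1 hh2 hh₀ hγ0 hγ1 hℓ hα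
  have hT1 : |qstar * a₂ * g ^ 2 * (1 - p ^ 2) * X ^ 2|
      ≤ 2 * |qstar| * a₂ * g ^ 2 * X ^ 2 := by
    have heq : |qstar * a₂ * g ^ 2 * (1 - p ^ 2) * X ^ 2|
        = |qstar| * a₂ * g ^ 2 * |1 - p ^ 2| * X ^ 2 := by
      rw [abs_mul, abs_mul, abs_mul, abs_mul, abs_of_pos ha₂,
        abs_of_nonneg (sq_nonneg g), abs_of_nonneg (sq_nonneg X)]
    have h1 : |1 - p ^ 2| ≤ 2 := by
      rw [abs_le]; constructor <;> nlinarith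
    rw [heq]
    nlinarith [mul_nonneg (mul_nonneg (mul_nonneg (abs_nonneg qstar) ha₂.le)
      (sq_nonneg g)) (sq_nonneg X)]
  have hT2 : |a₁ * C * g * (1 + g) * (1 - p) * X|
      = a₁ * |C| * g * (1 + g) * (|1 - p| * X) := by
    rw [abs_mul, abs_mul, abs_mul, abs_mul, abs_mul, abs_of_pos ha₁,
      abs_of_pos hg0, abs_of_pos (by linarith : (0:ℝ) < 1 + g),
      abs_of_pos hX0]
    ring
  have hT3 : |a₁ * (e₁ * g * (g - p) + e₂ * (1 - g * p))|
      ≤ a₁ * K * (1 + g) ^ 2 * Y := by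
    have i1 : |e₁ * g * (g - p)| ≤ K * Y * (g * (1 + g)) := by
      rw [abs_mul, abs_mul, abs_of_pos hg0]
      have hgp : |g - p| ≤ 1 + g := by
        rw [abs_le]; constructor <;> linarith
      nlinarith [abs_nonneg e₁, abs_nonneg (g - p),
        mul_le_mul he1b hgp (abs_nonneg _) (mul_nonneg hK hY0.le)]
    have i2 : |e₂ * (1 - g * p)| ≤ K * Y * (1 + g) := by
      rw [abs_mul]
      have hgp : |1 - g * p| ≤ 1 + g := by
        rw [abs_le]; constructor <;> nlinarith
      nlinarith [abs_nonneg e₂, abs_nonneg (1 - g * p),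
        mul_le_mul he2b hgp (abs_nonneg _) (mul_nonneg hK hY0.le)]
    rw [abs_mul, abs_of_pos ha₁]
    nlinarith [abs_add_le (e₁ * g * (g - p)) (e₂ * (1 - g * p))]
  have tri : |qstar * a₂ * g ^ 2 * (1 - p ^ 2) * X ^ 2
          - a₁ * C * g * (1 + g) * (1 - p) * X
          - a₁ * (e₁ * g * (g - p) + e₂ * (1 - g * p))|
      ≤ 2 * |qstar| * a₂ * g ^ 2 * X ^ 2
          + a₁ * |C| * g * (1 + g) * (|1 - p| * X)
          + a₁ * K * (1 + g) ^ 2 * Y := by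
    have u1 := abs_sub (qstar * a₂ * g ^ 2 * (1 - p ^ 2) * X ^ 2
        - a₁ * C * g * (1 + g) * (1 - p) * X)
      (a₁ * (e₁ * g * (g - p) + e₂ * (1 - g * p)))
    have u2 := abs_sub (qstar * a₂ * g ^ 2 * (1 - p ^ 2) * X ^ 2)
      (a₁ * C * g * (1 + g) * (1 - p) * X)
    linarith [hT1, hT3, u1, u2, hT2.le, hT2.ge]
  have step : |qstar * a₂ * g ^ 2 * (1 - p ^ 2) * X ^ 2
          - a₁ * C * g * (1 + g) * (1 - p) * X
          - a₁ * (e₁ * g * (g - p) + e₂ * (1 - g * p))| / D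
      ≤ (2 * |qstar| * a₂ * g ^ 2 * X ^ 2
          + a₁ * |C| * g * (1 + g) * (|1 - p| * X)
          + a₁ * K * (1 + g) ^ 2 * Y) / A :=
    div_le_div₀ (by positivity) tri hApos hDA
  refine step.trans (le_of_eq ?_)
  field_simp
end
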